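/- arXiv:2502.05440 — 5 statements merged into one kernel-verified Lean document; each statement's English description precedes it below -/
import Mathlib

section
/- Let H and H′ be n×n real symmetric positive definite matrices, γ₁ > 0, and suppose H′ ≥ γ₁ H in the Loewner order. Let e, ν ∈ ℝⁿ and define e⁺ = γ₁ (H′)⁻¹ H (e + ν). Then e⁺ᵀ H′ e⁺ ≤ 2γ₁ (eᵀ H e + νᵀ H ν). -/
/-!
Write `x = e + ν` and `y = H'⁻¹ H x`, so that `e⁺ = γ₁ y` and `H' y = H x`; in particular
`yᵀ H' y = yᵀ H x`. Expanding `0 ≤ (x - γ₁ y)ᵀ H (x - γ₁ y)` and bounding `γ₁ yᵀ H y ≤ yᵀ H' y`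
by the Loewner hypothesis yields `γ₁ yᵀ H' y ≤ xᵀ H x`, and the parallelogram law gives
`xᵀ H x ≤ 2 (eᵀ H e + νᵀ H ν)`.
-/

open Matrix

variable {ι : Type*} [Fintype ι]

theorem Matrix.dotProduct_mulVec_add_add_sub {R : Type*} [CommRing R] (M : Matrix ι ι R)
    (x y : ι → R) :
    (x + y) ⬝ᵥ M *ᵥ (x + y) + (x - y) ⬝ᵥ M *ᵥ (x - y)
      = 2 * (x ⬝ᵥ M *ᵥ x + y ⬝ᵥ M *ᵥ y) := by
  simp only [mulVec_add, mulVec_sub, dotProduct_add, dotProduct_sub, add_dotProduct,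
    sub_dotProduct]
  ring

namespace Matrix.PosSemidef

variable {M : Matrix ι ι ℝ}

theorem dotProduct_mulVec_nonneg' (hM : M.PosSemidef) (x : ι → ℝ) : 0 ≤ x ⬝ᵥ M *ᵥ x := by
  simpa using hM.dotProduct_mulVec_nonneg x

theorem dotProduct_mulVec_comm (hM : M.PosSemidef) (x y : ι → ℝ) :
    x ⬝ᵥ M *ᵥ y = y ⬝ᵥ M *ᵥ x := by
  rw [dotProduct_mulVec, ← mulVec_transpose, dotProduct_comm,
    ← conjTranspose_eq_transpose_of_trivial, hM.isHermitian.eq]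

theorem dotProduct_mulVec_le_of_sub {N : Matrix ι ι ℝ} (h : (M - N).PosSemidef) (x : ι → ℝ) :
    x ⬝ᵥ N *ᵥ x ≤ x ⬝ᵥ M *ᵥ x := by
  have := h.dotProduct_mulVec_nonneg' x
  rw [sub_mulVec, dotProduct_sub] at this
  linarith

theorem add_dotProduct_mulVec_add_le (hM : M.PosSemidef) (x y : ι → ℝ) :
    (x + y) ⬝ᵥ M *ᵥ (x + y) ≤ 2 * (x ⬝ᵥ M *ᵥ x + y ⬝ᵥ M *ᵥ y) := by
  linarith [M.dotProduct_mulVec_add_add_sub x y, hM.dotProduct_mulVec_nonneg' (x - y)]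

end Matrix.PosSemidef

theorem smul_dotProduct_mulVec_le_of_mulVec_eq {H H' : Matrix ι ι ℝ} {γ : ℝ}
    (hH : H.PosSemidef) (hγ : 0 ≤ γ) (hLoewner : (H' - γ • H).PosSemidef) {x y : ι → ℝ}
    (hxy : H' *ᵥ y = H *ᵥ x) :
    γ * (y ⬝ᵥ H' *ᵥ y) ≤ x ⬝ᵥ H *ᵥ x := by
  have hcross : y ⬝ᵥ H' *ᵥ y = y ⬝ᵥ H *ᵥ x := by rw [hxy]
  have hloewner : γ * (y ⬝ᵥ H *ᵥ y) ≤ y ⬝ᵥ H' *ᵥ y := by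
    simpa only [smul_mulVec, dotProduct_smul, smul_eq_mul] using hLoewner.dotProduct_mulVec_le_of_sub y
  have hexpand : (x - γ • y) ⬝ᵥ H *ᵥ (x - γ • y)
      = x ⬝ᵥ H *ᵥ x - 2 * γ * (y ⬝ᵥ H *ᵥ x) + γ ^ 2 * (y ⬝ᵥ H *ᵥ y) := by
    simp only [mulVec_sub, mulVec_smul, dotProduct_sub, sub_dotProduct, dotProduct_smul,
      smul_dotProduct, smul_eq_mul, hH.dotProduct_mulVec_comm x y]
    ring
  nlinarith [hH.dotProduct_mulVec_nonneg' (x - γ • y), mul_le_mul_of_nonneg_left hloewner hγ]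

/-- non-impulsive Lyapunov decrement: if `H, H'` are symmetric positive
definite, `γ₁ > 0`, `H' ≥ γ₁ H` in the Loewner order, and
`e⁺ = γ₁ (H')⁻¹ H (e + ν)`, then `e⁺ᵀ H' e⁺ ≤ 2γ₁ (eᵀ H e + νᵀ H ν)`. -/
theorem lyapunov_decrement_non_impulsive (n : ℕ) (H H' : Matrix (Fin n) (Fin n) ℝ)
    (hH : H.PosDef) (hH' : H'.PosDef) (γ₁ : ℝ) (hγ₁ : 0 < γ₁)
    (hLoewner : (H' - γ₁ • H).PosSemidef)
    (e ν : Fin n → ℝ) (eplus : Fin n → ℝ)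
    (heplus : eplus = γ₁ • ((H')⁻¹ * H) *ᵥ (e + ν)) :
    eplus ⬝ᵥ H' *ᵥ eplus ≤ 2 * γ₁ * (e ⬝ᵥ H *ᵥ e + ν ⬝ᵥ H *ᵥ ν) := by
  set y := (H')⁻¹ *ᵥ (H *ᵥ (e + ν))
  have hy : H' *ᵥ y = H *ᵥ (e + ν) := by
    rw [mulVec_mulVec, mul_nonsing_inv _ ((isUnit_iff_isUnit_det H').mp hH'.isUnit), one_mulVec]
  have heplus_eq : eplus = γ₁ • y := by rw [heplus, ← mulVec_mulVec]
  have hdecrement := smul_dotProduct_mulVec_le_of_mulVec_eq hH.posSemidef hγ₁.le hLoewner hy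
  calc eplus ⬝ᵥ H' *ᵥ eplus = γ₁ * (γ₁ * (y ⬝ᵥ H' *ᵥ y)) := by
        rw [heplus_eq, mulVec_smul, dotProduct_smul, smul_dotProduct, smul_eq_mul, smul_eq_mul]
    _ ≤ γ₁ * ((e + ν) ⬝ᵥ H *ᵥ (e + ν)) := mul_le_mul_of_nonneg_left hdecrement hγ₁.le
    _ ≤ 2 * γ₁ * (e ⬝ᵥ H *ᵥ e + ν ⬝ᵥ H *ᵥ ν) := by
        nlinarith [hH.posSemidef.add_dotProduct_mulVec_add_le e ν]
end

section
/- Let H and H′ be n×n real symmetric positive definite matrices, γ₁ > 0, and suppose H′ ≥ γ₁ H in the Loewner order. Let e, ν, θ ∈ ℝⁿ and define e⁺ = γ₁ (H′)⁻¹ H (e + ν + θ). Then e⁺ᵀ H′ e⁺ ≤ 3γ₁ (eᵀ H e + νᵀ H ν + θᵀ H θ). -/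
/-!
With `y = e + ν + θ` and `z = (H')⁻¹ H y` we have `H' z = H y`, so the left-hand side is
`γ₁² zᵀH'z = γ₁² zᵀHy`. Testing the Loewner bound on `z` gives `γ₁ zᵀHz ≤ zᵀHy`, and
Cauchy–Schwarz for the semi-inner product `⟪u, v⟫ = uᵀHv` gives `(zᵀHy)² ≤ zᵀHz · yᵀHy`;
together `γ₁ zᵀHy ≤ yᵀHy`. It remains to bound `yᵀHy` by `3 (eᵀHe + νᵀHν + θᵀHθ)`, which is
convexity of the quadratic form.
-/

open Matrix

namespace Matrix.PosSemidef

variable {n : Type*} [Fintype n]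

theorem inner_toInnerProductSpace {M : Matrix n n ℝ} (hM : M.PosSemidef) (x y : n → ℝ) :
    @inner ℝ _ (M.toInnerProductSpace hM).toInner x y = x ⬝ᵥ M *ᵥ y := by
  change (M *ᵥ y) ⬝ᵥ star x = _
  rw [dotProduct_comm, star_trivial]

theorem dotProduct_mulVec_sq_le {M : Matrix n n ℝ} (hM : M.PosSemidef) (x y : n → ℝ) :
    (x ⬝ᵥ M *ᵥ y) ^ 2 ≤ (x ⬝ᵥ M *ᵥ x) * (y ⬝ᵥ M *ᵥ y) := by
  let := M.toSeminormedAddCommGroup hM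
  let := M.toInnerProductSpace hM
  simpa only [sq, hM.inner_toInnerProductSpace] using real_inner_mul_inner_self_le x y

theorem dotProduct_mulVec_add_add_le {M : Matrix n n ℝ} (hM : M.PosSemidef) (x y z : n → ℝ) :
    (x + y + z) ⬝ᵥ M *ᵥ (x + y + z) ≤
      3 * (x ⬝ᵥ M *ᵥ x + y ⬝ᵥ M *ᵥ y + z ⬝ᵥ M *ᵥ z) := by
  let := M.toSeminormedAddCommGroup hM
  let := M.toInnerProductSpace hM
  simp only [← hM.inner_toInnerProductSpace]
  -- `3 (‖x‖² + ‖y‖² + ‖z‖²) - ‖x + y + z‖² = ‖x - y‖² + ‖y - z‖² + ‖z - x‖²`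
  have hxy := real_inner_self_nonneg (x := x - y)
  have hyz := real_inner_self_nonneg (x := y - z)
  have hzx := real_inner_self_nonneg (x := z - x)
  simp only [inner_add_left, inner_add_right, inner_sub_left, inner_sub_right,
    real_inner_comm x y, real_inner_comm x z, real_inner_comm y z] at *
  linarith

/-- In operator form: `H' ≥ γ H` implies `H H'⁻¹ H ≤ γ⁻¹ H`. -/
theorem mul_dotProduct_mulVec_le_of_mulVec_eq {H H' : Matrix n n ℝ} {γ : ℝ} (hγ : 0 ≤ γ)
    (hH : H.PosSemidef) (hLoewner : (H' - γ • H).PosSemidef) {y z : n → ℝ}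
    (hz : H' *ᵥ z = H *ᵥ y) :
    γ * (z ⬝ᵥ H' *ᵥ z) ≤ y ⬝ᵥ H *ᵥ y := by
  rw [hz]
  have hloewner : γ * (z ⬝ᵥ H *ᵥ z) ≤ z ⬝ᵥ H *ᵥ y := by
    have h := hLoewner.dotProduct_mulVec_nonneg z
    rw [star_trivial, sub_mulVec, dotProduct_sub, smul_mulVec, dotProduct_smul, smul_eq_mul,
      hz] at h
    linarith
  have hcs := hH.dotProduct_mulVec_sq_le z y
  have hzz : 0 ≤ z ⬝ᵥ H *ᵥ z := by simpa using hH.dotProduct_mulVec_nonneg z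
  have hyy : 0 ≤ y ⬝ᵥ H *ᵥ y := by simpa using hH.dotProduct_mulVec_nonneg y
  rcases le_or_gt (z ⬝ᵥ H *ᵥ y) 0 with hs | hs
  · nlinarith
  · nlinarith

end Matrix.PosSemidef

/-- impulsive Lyapunov decrement: if `H, H'` are symmetric positive
definite, `γ₁ > 0`, `H' ≥ γ₁ H` in the Loewner order, and
`e⁺ = γ₁ (H')⁻¹ H (e + ν + θ)`, then
`e⁺ᵀ H' e⁺ ≤ 3γ₁ (eᵀ H e + νᵀ H ν + θᵀ H θ)`. -/
theorem lyapunov_decrement_impulsive (n : ℕ) (H H' : Matrix (Fin n) (Fin n) ℝ)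
    (hH : H.PosDef) (hH' : H'.PosDef) (γ₁ : ℝ) (hγ₁ : 0 < γ₁)
    (hLoewner : (H' - γ₁ • H).PosSemidef)
    (e ν θ : Fin n → ℝ) (eplus : Fin n → ℝ)
    (heplus : eplus = γ₁ • ((H')⁻¹ * H) *ᵥ (e + ν + θ)) :
    eplus ⬝ᵥ H' *ᵥ eplus ≤ 3 * γ₁ * (e ⬝ᵥ H *ᵥ e + ν ⬝ᵥ H *ᵥ ν + θ ⬝ᵥ H *ᵥ θ) := by
  set z := (H')⁻¹ *ᵥ (H *ᵥ (e + ν + θ)) with hz_def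
  have hz : H' *ᵥ z = H *ᵥ (e + ν + θ) := by
    rw [hz_def, mulVec_mulVec, mul_nonsing_inv _ (isUnit_iff_ne_zero.mpr hH'.det_pos.ne'),
      one_mulVec]
  have heplus_z : eplus = γ₁ • z := by rw [heplus, hz_def, mulVec_mulVec]
  calc eplus ⬝ᵥ H' *ᵥ eplus = γ₁ * (γ₁ * (z ⬝ᵥ H' *ᵥ z)) := by
        rw [heplus_z, mulVec_smul, dotProduct_smul, smul_dotProduct, smul_eq_mul, smul_eq_mul]
    _ ≤ γ₁ * ((e + ν + θ) ⬝ᵥ H *ᵥ (e + ν + θ)) := by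
        gcongr
        exact hH.posSemidef.mul_dotProduct_mulVec_le_of_mulVec_eq hγ₁.le hLoewner hz
    _ ≤ 3 * γ₁ * (e ⬝ᵥ H *ᵥ e + ν ⬝ᵥ H *ᵥ ν + θ ⬝ᵥ H *ᵥ θ) := by
        rw [mul_assoc 3, mul_left_comm]
        gcongr
        exact hH.posSemidef.dotProduct_mulVec_add_add_le e ν θ
end

section
/- Let a ∈ (0,1), b ≥ 0, c₁, c₂ ≥ 0 and ℓ ≥ 2 an integer with a^{ℓ−1} b < 1. Let (kₘ)_{m≥1} be a strictly increasing sequence of naturals with k₁ = 0 and kₘ₊₁ − kₘ ≥ ℓ for all m. Then there exists a constant C ≥ 0, depending only on a, b, c₁, c₂, ℓ (and not on V(0) or the sequence (kₘ)), such that every sequence V : ℕ → [0,∞) satisfying V(k+1) ≤ a V(k) + c₁ whenever k is not one of the kₘ and V(k+1) ≤ b V(k) + c₂ whenever k = kₘ for some m, satisfies limsup_{k→∞} V(k) ≤ C; moreover every such V is bounded. -/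
open Filter Set Topology

/-!
Off the impulse instants `V` contracts by `a`, so along an impulse-free stretch of length `n` it
stays below `aⁿ V(s) + c₁ / (1 - a)`. Across one gap `kₘ₊₁ - kₘ ≥ ℓ` the impulse amplifies by at
most `b` and the `≥ ℓ - 1` quiet steps that follow contract by at least `a^(ℓ-1)`, so the values
`V(kₘ)` obey an affine recursion with factor `ρ = a^(ℓ-1) b < 1` and constant `K = c₂ + c₁/(1-a)`.
Hence `V(kₘ) ≤ ρᵐ V(0) + K / (1 - ρ)`, and within a gap `V` exceeds `V(kₘ)` by at most the factor
`max 1 b` and the summand `K`. Letting `m → ∞` bounds the limsup; `m = 0` bounds `V` uniformly.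
-/

theorem le_pow_mul_add_of_le_mul_add {u : ℕ → ℝ} {r c : ℝ} (hr₀ : 0 ≤ r) (hr₁ : r < 1)
    (hc : 0 ≤ c) {n : ℕ} (h : ∀ j < n, u (j + 1) ≤ r * u j + c) :
    u n ≤ r ^ n * u 0 + c / (1 - r) := by
  have hr : 0 < 1 - r := by linarith
  induction n with
  | zero => simpa using div_nonneg hc hr.le
  | succ n ih =>
    have hfix : r * (c / (1 - r)) + c = c / (1 - r) := by field_simp; ring
    calc u (n + 1) ≤ r * u n + c := h n n.lt_succ_self
      _ ≤ r * (r ^ n * u 0 + c / (1 - r)) + c := by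
        gcongr
        exact ih fun j hj => h j (hj.trans n.lt_succ_self)
      _ = r ^ (n + 1) * u 0 + c / (1 - r) := by rw [pow_succ]; linear_combination hfix

theorem limsup_le_of_tendsto_of_forall_eventually_le {α β : Type*} {l : Filter α}
    {l' : Filter β} [l'.NeBot] {u : α → ℝ} {f : β → ℝ} {L : ℝ}
    (hu : IsCoboundedUnder (· ≤ ·) l u) (hf : Tendsto f l' (𝓝 L))
    (h : ∀ M, ∀ᶠ k in l, u k ≤ f M) : limsup u l ≤ L :=
  ge_of_tendsto' hf fun M => limsup_le_of_le hu (h M)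

namespace StrictMono

variable {km : ℕ → ℕ}

theorem notMem_range_of_lt_of_lt (hkm : StrictMono km) {m k : ℕ} (h₁ : km m < k)
    (h₂ : k < km (m + 1)) : k ∉ range km := by
  rintro ⟨n, rfl⟩
  have := hkm.lt_iff_lt.mp h₁
  have := hkm.lt_iff_lt.mp h₂
  omega

theorem exists_le_lt_succ (hkm : StrictMono km) (h₀ : km 0 = 0) (k : ℕ) :
    ∃ m, km m ≤ k ∧ k < km (m + 1) := by
  obtain ⟨m, h₁, h₂⟩ :=
    hkm.exists_between_of_tendsto_atTop hkm.tendsto_atTop (x := k + 1) (by omega)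
  exact ⟨m, by omega, by omega⟩

end StrictMono

structure IsImpulsiveSubsolution (a b c₁ c₂ : ℝ) (km : ℕ → ℕ) (V : ℕ → ℝ) : Prop where
  le_off : ∀ k, k ∉ range km → V (k + 1) ≤ a * V k + c₁
  le_on : ∀ k, k ∈ range km → V (k + 1) ≤ b * V k + c₂

def impulseContraction (a b : ℝ) (ℓ : ℕ) : ℝ := a ^ (ℓ - 1) * b

noncomputable def impulseDrift (a c₁ c₂ : ℝ) : ℝ := c₂ + c₁ / (1 - a)

theorem impulseDrift_nonneg {a c₁ c₂ : ℝ} (ha : a < 1) (hc₁ : 0 ≤ c₁) (hc₂ : 0 ≤ c₂) :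
    0 ≤ impulseDrift a c₁ c₂ :=
  add_nonneg hc₂ (div_nonneg hc₁ (by linarith))

namespace IsImpulsiveSubsolution

variable {a b c₁ c₂ : ℝ} {km : ℕ → ℕ} {V : ℕ → ℝ}

theorem le_of_add_one_add_le (hV : IsImpulsiveSubsolution a b c₁ c₂ km V)
    (hkm : StrictMono km) (ha₀ : 0 ≤ a) (ha₁ : a < 1) (hc₁ : 0 ≤ c₁) {m j : ℕ}
    (hj : km m + 1 + j ≤ km (m + 1)) :
    V (km m + 1 + j) ≤ a ^ j * (b * V (km m) + c₂) + c₁ / (1 - a) := by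
  have hquiet : ∀ i < j, V (km m + 1 + (i + 1)) ≤ a * V (km m + 1 + i) + c₁ := fun i hi =>
    hV.le_off _ (hkm.notMem_range_of_lt_of_lt (m := m) (k := km m + 1 + i) (by omega) (by omega))
  calc V (km m + 1 + j) ≤ a ^ j * V (km m + 1) + c₁ / (1 - a) :=
        le_pow_mul_add_of_le_mul_add (u := fun i => V (km m + 1 + i)) ha₀ ha₁ hc₁ hquiet
    _ ≤ a ^ j * (b * V (km m) + c₂) + c₁ / (1 - a) := by
        gcongr
        exact hV.le_on _ ⟨m, rfl⟩

theorem le_impulseContraction_mul_add (hV : IsImpulsiveSubsolution a b c₁ c₂ km V)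
    (hkm : StrictMono km) (ha₀ : 0 ≤ a) (ha₁ : a < 1) (hb : 0 ≤ b) (hc₁ : 0 ≤ c₁)
    (hc₂ : 0 ≤ c₂) (hV₀ : ∀ k, 0 ≤ V k) {ℓ m : ℕ} (hgap : km m + ℓ ≤ km (m + 1)) :
    V (km (m + 1)) ≤ impulseContraction a b ℓ * V (km m) + impulseDrift a c₁ c₂ := by
  have hlt := hkm (Nat.lt_add_one m)
  obtain ⟨j, hj⟩ : ∃ j, km (m + 1) = km m + 1 + j := ⟨km (m + 1) - km m - 1, by omega⟩
  have hbound := hV.le_of_add_one_add_le hkm ha₀ ha₁ hc₁ hj.ge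
  have hpow : a ^ j ≤ a ^ (ℓ - 1) := pow_le_pow_of_le_one ha₀ ha₁.le (by omega)
  have hpow₁ : a ^ j ≤ 1 := pow_le_one₀ ha₀ ha₁.le
  have := hV₀ (km m)
  rw [hj]
  calc V (km m + 1 + j) ≤ a ^ j * (b * V (km m)) + a ^ j * c₂ + c₁ / (1 - a) := by
        linarith [mul_add (a ^ j) (b * V (km m)) c₂]
    _ ≤ a ^ (ℓ - 1) * (b * V (km m)) + 1 * c₂ + c₁ / (1 - a) := by gcongr
    _ = _ := by rw [impulseContraction, impulseDrift]; ring

theorem le_max_mul_add (hV : IsImpulsiveSubsolution a b c₁ c₂ km V)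
    (hkm : StrictMono km) (ha₀ : 0 ≤ a) (ha₁ : a < 1) (hb : 0 ≤ b) (hc₁ : 0 ≤ c₁)
    (hc₂ : 0 ≤ c₂) (hV₀ : ∀ k, 0 ≤ V k) {m k : ℕ} (h₁ : km m ≤ k) (h₂ : k < km (m + 1)) :
    V k ≤ max 1 b * V (km m) + impulseDrift a c₁ c₂ := by
  have hK := impulseDrift_nonneg ha₁ hc₁ hc₂
  have h₁b : V (km m) ≤ max 1 b * V (km m) := le_mul_of_one_le_left (hV₀ _) (le_max_left _ _)
  have hbb : b * V (km m) ≤ max 1 b * V (km m) := by gcongr; exacts [hV₀ _, le_max_right _ _]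
  obtain rfl | hlt := h₁.eq_or_lt
  · linarith
  obtain ⟨j, rfl⟩ : ∃ j, k = km m + 1 + j := ⟨k - km m - 1, by omega⟩
  have hbound := hV.le_of_add_one_add_le hkm ha₀ ha₁ hc₁ h₂.le
  have hpow₁ : a ^ j ≤ 1 := pow_le_one₀ ha₀ ha₁.le
  have : a ^ j * (b * V (km m) + c₂) ≤ b * V (km m) + c₂ :=
    mul_le_of_le_one_left (by have := hV₀ (km m); positivity) hpow₁
  rw [impulseDrift]
  linarith

theorem le_of_impulse_le (hV : IsImpulsiveSubsolution a b c₁ c₂ km V)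
    (hkm : StrictMono km) (h₀ : km 0 = 0) {ℓ : ℕ} (hgap : ∀ m, km m + ℓ ≤ km (m + 1))
    (ha₀ : 0 ≤ a) (ha₁ : a < 1) (hb : 0 ≤ b) (hc₁ : 0 ≤ c₁) (hc₂ : 0 ≤ c₂)
    (hρ : impulseContraction a b ℓ < 1) (hV₀ : ∀ k, 0 ≤ V k) {M k : ℕ} (hk : km M ≤ k) :
    V k ≤ max 1 b * (impulseContraction a b ℓ ^ M * V 0 +
      impulseDrift a c₁ c₂ / (1 - impulseContraction a b ℓ)) + impulseDrift a c₁ c₂ := by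
  set ρ := impulseContraction a b ℓ
  have hρ₀ : 0 ≤ ρ := mul_nonneg (pow_nonneg ha₀ _) hb
  obtain ⟨m, h₁, h₂⟩ := hkm.exists_le_lt_succ h₀ k
  have hMm : M ≤ m := Nat.lt_succ_iff.mp (hkm.lt_iff_lt.mp (hk.trans_lt h₂))
  have himpulse : V (km m) ≤ ρ ^ m * V 0 + impulseDrift a c₁ c₂ / (1 - ρ) := by
    simpa [h₀] using le_pow_mul_add_of_le_mul_add (u := V ∘ km) hρ₀ hρ
      (impulseDrift_nonneg ha₁ hc₁ hc₂) fun j _ =>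
        hV.le_impulseContraction_mul_add hkm ha₀ ha₁ hb hc₁ hc₂ hV₀ (hgap j)
  have hpow : ρ ^ m * V 0 ≤ ρ ^ M * V 0 :=
    mul_le_mul_of_nonneg_right (pow_le_pow_of_le_one hρ₀ hρ.le hMm) (hV₀ 0)
  calc V k ≤ max 1 b * V (km m) + impulseDrift a c₁ c₂ :=
        hV.le_max_mul_add hkm ha₀ ha₁ hb hc₁ hc₂ hV₀ h₁ h₂
    _ ≤ _ := by gcongr; linarith

end IsImpulsiveSubsolution

theorem impulsive_recursion_limsup_bound_general (a b c₁ c₂ : ℝ) (ℓ : ℕ)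
    (ha : 0 < a) (ha' : a < 1) (hb : 0 ≤ b) (hc₁ : 0 ≤ c₁) (hc₂ : 0 ≤ c₂)
    (hab : a ^ (ℓ - 1) * b < 1) :
    ∃ C ≥ (0 : ℝ), ∀ (km : ℕ → ℕ) (V : ℕ → ℝ),
      StrictMono km → km 0 = 0 → (∀ m, km m + ℓ ≤ km (m + 1)) →
      (∀ k, 0 ≤ V k) →
      (∀ k, k ∉ Set.range km → V (k + 1) ≤ a * V k + c₁) →
      (∀ k, k ∈ Set.range km → V (k + 1) ≤ b * V k + c₂) →
      limsup V atTop ≤ C ∧ ∃ B, ∀ k, V k ≤ B := by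
  set ρ := impulseContraction a b ℓ
  set K := impulseDrift a c₁ c₂
  have hρ : ρ < 1 := hab
  have hK := impulseDrift_nonneg ha' hc₁ hc₂
  have hS : 0 ≤ K / (1 - ρ) := div_nonneg hK (by linarith)
  refine ⟨max 1 b * (K / (1 - ρ)) + K, by positivity,
    fun km V hkm h₀ hgap hV₀ hoff hon => ?_⟩
  have hbound M k (hk : km M ≤ k) :=
    IsImpulsiveSubsolution.le_of_impulse_le ⟨hoff, hon⟩ hkm h₀ hgap ha.le ha' hb hc₁ hc₂ hρ hV₀ hk
  have hlim : Tendsto (fun M => max 1 b * (ρ ^ M * V 0 + K / (1 - ρ)) + K) atTop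
      (𝓝 (max 1 b * (K / (1 - ρ)) + K)) := by
    have hρ₀ : 0 ≤ ρ := mul_nonneg (pow_nonneg ha.le _) hb
    simpa using (((tendsto_pow_atTop_nhds_zero_of_lt_one hρ₀ hρ).mul_const (V 0)).add_const
      (K / (1 - ρ))).const_mul (max 1 b) |>.add_const K
  refine ⟨limsup_le_of_tendsto_of_forall_eventually_le (isCoboundedUnder_le_of_le atTop hV₀)
    hlim fun M => eventually_atTop.2 ⟨km M, hbound M⟩,
    max 1 b * (V 0 + K / (1 - ρ)) + K, fun k => ?_⟩
  simpa using hbound 0 k (by omega)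

/-- let `a ∈ (0,1)`, `b ≥ 0`, `c₁, c₂ ≥ 0`, `ℓ ≥ 2` an integer with
`a^(ℓ−1) b < 1`, and let `(kₘ)` be strictly increasing impulse instants with `k₁ = 0`
and consecutive gaps at least `ℓ`. Then there is a constant `C ≥ 0`, depending only on
`a, b, c₁, c₂, ℓ` (not on `V(0)` or the impulse instants), such that every nonnegative
sequence `V` with `V(k+1) ≤ a V(k) + c₁` off the impulse instants and
`V(k+1) ≤ b V(k) + c₂` at the impulse instants satisfies `limsup V ≤ C`; moreover
every such `V` is bounded. -/
theorem impulsive_recursion_limsup_bound (a b c₁ c₂ : ℝ) (ℓ : ℕ)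
    (ha : 0 < a) (ha' : a < 1) (hb : 0 ≤ b) (hc₁ : 0 ≤ c₁) (hc₂ : 0 ≤ c₂)
    (hℓ : 2 ≤ ℓ) (hab : a ^ (ℓ - 1) * b < 1) :
    ∃ C ≥ (0 : ℝ), ∀ (km : ℕ → ℕ) (V : ℕ → ℝ),
      StrictMono km → km 0 = 0 → (∀ m, km m + ℓ ≤ km (m + 1)) →
      (∀ k, 0 ≤ V k) →
      (∀ k, k ∉ Set.range km → V (k + 1) ≤ a * V k + c₁) →
      (∀ k, k ∈ Set.range km → V (k + 1) ≤ b * V k + c₂) →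
      limsup V atTop ≤ C ∧ ∃ B, ∀ k, V k ≤ B :=
  impulsive_recursion_limsup_bound_general a b c₁ c₂ ℓ ha ha' hb hc₁ hc₂ hab
end

section
/- (Theorem 1) Let γ₁ with 0 < 2γ₁ ≤ 2/3, γ₂ ∈ (0,1], ν̄, θ̄ ≥ 0, integer ℓ ≥ 2, and scalars 0 < b̂ ≤ b̌. Then there exists C ≥ 0, depending only on γ₁, ν̄, θ̄, ℓ, b̂, b̌, such that the following holds. Let p : ℕ → ℝⁿ, let η⁻¹ : ℕ → (n×n symmetric positive definite matrices) satisfy η⁻¹(k+1) = γ₁ η⁻¹(k) + (1/γ₂) p(k+1) p(k+1)ᵀ and b̂ Iₙ ≤ η⁻¹(k) ≤ b̌ Iₙ in the Loewner order for all k. Let (kₘ)_{m≥1} be strictly increasing impulse instants with k₁ = 0 and kₘ₊₁ − kₘ ≥ ℓ, and let ν, θ : ℕ → ℝⁿ with ‖ν(k)‖ ≤ ν̄ and ‖θ(k)‖ ≤ θ̄. If the estimation error ê : ℕ → ℝⁿ satisfies ê(k+1) = γ₁ η(k+1) η⁻¹(k) (ê(k) + ν(k)) at non-impulse instants and ê(k+1)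 = γ₁ η(k+1) η⁻¹(k) (ê(k) + ν(k) + θ(k)) at impulse instants k = kₘ, then limsup_{k→∞} ‖ê(k)‖² ≤ C. That is, the target position estimator approximately estimates the target position, with an asymptotic error bound independent of the initial estimation error. -/
/-!
The weighted error `V k = ê(k)ᵀ η⁻¹(k) ê(k)` is a Lyapunov function. Since
`η⁻¹(k+1) - γ₁ η⁻¹(k)` is a rank-one positive semidefinite matrix, one step of the error
recursion multiplies the weighted norm of `ê(k) + d(k)` by at most `γ₁`, where `d(k)` is the
(bounded) displacement, with or without impulse. Splitting `ê + d` costs a factor `2`, so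
`V (k+1) ≤ 2γ₁ V k + const`, and `2γ₁ < 1` makes `V` converge geometrically into a ball whose
radius does not depend on `ê(0)`; the Loewner bound `b̂ I ≤ η⁻¹` turns this into a bound on
`‖ê(k)‖²`.
-/

open Matrix Filter

section QuadraticForm

variable {ι : Type*} [Fintype ι]

lemma Matrix.IsHermitian.dotProduct_mulVec_comm {M : Matrix ι ι ℝ} (hM : M.IsHermitian)
    (x y : ι → ℝ) : x ⬝ᵥ (M *ᵥ y) = y ⬝ᵥ (M *ᵥ x) := by
  have hMt : Mᵀ = M := by rw [← conjTranspose_eq_transpose_of_trivial]; exact hM.eq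
  rw [dotProduct_mulVec, ← hMt, vecMul_transpose, hMt, dotProduct_comm]

lemma Matrix.PosSemidef.dotProduct_mulVec_add_le {M : Matrix ι ι ℝ} (hM : M.PosSemidef)
    (x y : ι → ℝ) :
    (x + y) ⬝ᵥ (M *ᵥ (x + y)) ≤ 2 * (x ⬝ᵥ (M *ᵥ x)) + 2 * (y ⬝ᵥ (M *ᵥ y)) := by
  have h := hM.dotProduct_mulVec_nonneg (x - y)
  have hxy := hM.isHermitian.dotProduct_mulVec_comm x y
  simp only [star_trivial, mulVec_add, mulVec_sub, dotProduct_add, dotProduct_sub,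
    add_dotProduct, sub_dotProduct] at h ⊢
  linarith

lemma Matrix.PosSemidef.mul_dotProduct_self_le_dotProduct_mulVec [DecidableEq ι]
    {M : Matrix ι ι ℝ} {c : ℝ} (h : (M - c • 1).PosSemidef) (x : ι → ℝ) :
    c * (x ⬝ᵥ x) ≤ x ⬝ᵥ (M *ᵥ x) := by
  have := h.dotProduct_mulVec_nonneg x
  simp only [star_trivial, sub_mulVec, smul_mulVec, one_mulVec, dotProduct_sub,
    dotProduct_smul, smul_eq_mul] at this
  linarith

lemma Matrix.PosSemidef.dotProduct_mulVec_le_mul_dotProduct_self [DecidableEq ι]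
    {M : Matrix ι ι ℝ} {c : ℝ} (h : (c • 1 - M).PosSemidef) (x : ι → ℝ) :
    x ⬝ᵥ (M *ᵥ x) ≤ c * (x ⬝ᵥ x) := by
  have := h.dotProduct_mulVec_nonneg x
  simp only [star_trivial, sub_mulVec, smul_mulVec, one_mulVec, dotProduct_sub,
    dotProduct_smul, smul_eq_mul] at this
  linarith

lemma smul_dotProduct_mulVec_le_of_mulVec_eq_s13 {M N : Matrix ι ι ℝ} {γ : ℝ} (hγ : 0 ≤ γ)
    (hM : M.PosSemidef) (hNM : (N - γ • M).PosSemidef) {w x : ι → ℝ}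
    (hwx : N *ᵥ w = M *ᵥ x) : γ * (w ⬝ᵥ (N *ᵥ w)) ≤ x ⬝ᵥ (M *ᵥ x) := by
  -- expand `0 ≤ (γ w - x)ᵀ M (γ w - x)` and use `γ wᵀ M w ≤ wᵀ N w`, `wᵀ M x = wᵀ N w`
  have hsq := hM.dotProduct_mulVec_nonneg (γ • w - x)
  have hNw := hNM.dotProduct_mulVec_nonneg w
  have hxw : x ⬝ᵥ (M *ᵥ w) = w ⬝ᵥ (N *ᵥ w) := by
    rw [hM.isHermitian.dotProduct_mulVec_comm, hwx]
  have hwx' : w ⬝ᵥ (M *ᵥ x) = w ⬝ᵥ (N *ᵥ w) := by rw [hwx]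
  simp only [star_trivial, sub_mulVec, smul_mulVec, mulVec_sub, mulVec_smul, dotProduct_sub,
    sub_dotProduct, dotProduct_smul, smul_dotProduct, smul_eq_mul] at hsq hNw
  nlinarith [mul_le_mul_of_nonneg_left hNw hγ]

lemma dotProduct_mulVec_covariance_update_le [DecidableEq ι] {M N : Matrix ι ι ℝ}
    {γ₁ γ₂ b δ : ℝ} {p : ι → ℝ} (hγ₁ : 0 ≤ γ₁) (hγ₂ : 0 ≤ γ₂) (hb : 0 ≤ b)
    (hM : M.PosSemidef) (hMb : (b • 1 - M).PosSemidef) (hN : IsUnit N.det)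
    (hNM : N = γ₁ • M + γ₂⁻¹ • vecMulVec p p) {e d : ι → ℝ} (hd : d ⬝ᵥ d ≤ δ) :
    (γ₁ • ((N⁻¹ * M) *ᵥ (e + d))) ⬝ᵥ (N *ᵥ (γ₁ • ((N⁻¹ * M) *ᵥ (e + d))))
      ≤ 2 * γ₁ * (e ⬝ᵥ (M *ᵥ e)) + 2 * γ₁ * b * δ := by
  set w := (N⁻¹ * M) *ᵥ (e + d)
  have hNw : N *ᵥ w = M *ᵥ (e + d) := by
    rw [mulVec_mulVec, mul_nonsing_inv_cancel_left _ _ hN]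
  have hgap : (N - γ₁ • M).PosSemidef := by
    rw [hNM, add_sub_cancel_left]
    simpa using (posSemidef_vecMulVec_self_star p).smul (inv_nonneg.mpr hγ₂)
  have hcontract := smul_dotProduct_mulVec_le_of_mulVec_eq_s13 hγ₁ hM hgap hNw
  have hsplit := hM.dotProduct_mulVec_add_le e d
  have hdM : d ⬝ᵥ (M *ᵥ d) ≤ b * δ :=
    (hMb.dotProduct_mulVec_le_mul_dotProduct_self d).trans (mul_le_mul_of_nonneg_left hd hb)
  calc (γ₁ • w) ⬝ᵥ (N *ᵥ (γ₁ • w)) = γ₁ * (γ₁ * (w ⬝ᵥ (N *ᵥ w))) := by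
        rw [mulVec_smul, smul_dotProduct, dotProduct_smul, smul_eq_mul, smul_eq_mul]
    _ ≤ γ₁ * ((e + d) ⬝ᵥ (M *ᵥ (e + d))) := mul_le_mul_of_nonneg_left hcontract hγ₁
    _ ≤ 2 * γ₁ * (e ⬝ᵥ (M *ᵥ e)) + 2 * γ₁ * b * δ := by nlinarith

end QuadraticForm

lemma sub_le_pow_mul_of_le_mul_add {u : ℕ → ℝ} {r c : ℝ} (hr0 : 0 ≤ r) (hr1 : r ≠ 1)
    (h : ∀ k, u (k + 1) ≤ r * u k + c) (k : ℕ) :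
    u k - c / (1 - r) ≤ r ^ k * (u 0 - c / (1 - r)) := by
  induction k with
  | zero => simp
  | succ k ih =>
    have hfix : r * (c / (1 - r)) + c = c / (1 - r) := by
      field_simp [sub_ne_zero.mpr hr1.symm]; ring
    calc u (k + 1) - c / (1 - r) ≤ r * (u k - c / (1 - r)) := by linarith [h k]
      _ ≤ r * (r ^ k * (u 0 - c / (1 - r))) := mul_le_mul_of_nonneg_left ih hr0
      _ = r ^ (k + 1) * (u 0 - c / (1 - r)) := by ring

lemma limsup_le_of_le_of_le_mul_add {f u : ℕ → ℝ} {r c : ℝ} (hr0 : 0 ≤ r) (hr1 : r < 1)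
    (hf : ∀ k, 0 ≤ f k) (hfu : ∀ k, f k ≤ u k) (h : ∀ k, u (k + 1) ≤ r * u k + c) :
    limsup f atTop ≤ c / (1 - r) := by
  set g : ℕ → ℝ := fun k => c / (1 - r) + r ^ k * (u 0 - c / (1 - r))
  have hg : Tendsto g atTop (nhds (c / (1 - r))) := by
    simpa using tendsto_const_nhds.add
      ((tendsto_pow_atTop_nhds_zero_of_lt_one hr0 hr1).mul_const (u 0 - c / (1 - r)))
  have hfg : ∀ k, f k ≤ g k := fun k => by
    linarith [hfu k, sub_le_pow_mul_of_le_mul_add hr0 hr1.ne h k]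
  calc limsup f atTop ≤ limsup g atTop :=
        limsup_le_limsup (.of_forall hfg) (isCoboundedUnder_le_of_le atTop hf)
          hg.isBoundedUnder_le
    _ = c / (1 - r) := hg.limsup_eq

theorem tpe_approximate_estimation_general (γ₁ γ₂ νbar θbar bhat bcheck : ℝ) (ℓ : ℕ)
    (hγ₁ : 0 < 2 * γ₁) (hγ₁' : 2 * γ₁ ≤ 2 / 3) (hγ₂ : 0 < γ₂)
    (hb : 0 < bhat) (hbb : bhat ≤ bcheck) :
    ∃ C ≥ (0 : ℝ), ∀ (n : ℕ) (p : ℕ → Fin n → ℝ)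
      (ηinv : ℕ → Matrix (Fin n) (Fin n) ℝ) (km : ℕ → ℕ) (ν θ ehat : ℕ → Fin n → ℝ),
      (∀ k, (ηinv k).PosDef) →
      (∀ k, ηinv (k + 1) = γ₁ • ηinv k + γ₂⁻¹ • vecMulVec (p (k + 1)) (p (k + 1))) →
      (∀ k, (ηinv k - bhat • (1 : Matrix (Fin n) (Fin n) ℝ)).PosSemidef) →
      (∀ k, (bcheck • (1 : Matrix (Fin n) (Fin n) ℝ) - ηinv k).PosSemidef) →
      StrictMono km → km 0 = 0 → (∀ m, km m + ℓ ≤ km (m + 1)) →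
      (∀ k, Real.sqrt (ν k ⬝ᵥ ν k) ≤ νbar) →
      (∀ k, Real.sqrt (θ k ⬝ᵥ θ k) ≤ θbar) →
      (∀ k, k ∉ Set.range km →
        ehat (k + 1) = γ₁ • (((ηinv (k + 1))⁻¹ * ηinv k) *ᵥ (ehat k + ν k))) →
      (∀ k, k ∈ Set.range km →
        ehat (k + 1) = γ₁ • (((ηinv (k + 1))⁻¹ * ηinv k) *ᵥ (ehat k + ν k + θ k))) →
      limsup (fun k => ehat k ⬝ᵥ ehat k) atTop ≤ C := by
  have hγ₁0 : 0 ≤ γ₁ := by linarith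
  have hbc : 0 ≤ bcheck := by linarith
  set δ := 2 * (νbar ^ 2 + θbar ^ 2)
  refine ⟨2 * γ₁ * bcheck * δ / bhat / (1 - 2 * γ₁), div_nonneg (by positivity) (by linarith), ?_⟩
  intro n p ηinv km ν θ ehat hpd hrec hlow hup _ _ _ hνb hθb hoff hon
  have hdisturbance : ∀ k, ∃ d, d ⬝ᵥ d ≤ δ ∧
      ehat (k + 1) = γ₁ • (((ηinv (k + 1))⁻¹ * ηinv k) *ᵥ (ehat k + d)) := by
    intro k
    have hν2 := (Real.sqrt_le_iff.mp (hνb k)).2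
    have hθ2 := (Real.sqrt_le_iff.mp (hθb k)).2
    by_cases hk : k ∈ Set.range km
    · refine ⟨ν k + θ k, ?_, by rw [hon k hk, add_assoc]⟩
      have := PosSemidef.one.dotProduct_mulVec_add_le (ν k) (θ k)
      simp only [one_mulVec] at this
      linarith
    · exact ⟨ν k, by nlinarith [dotProduct_star_self_nonneg (θ k)], hoff k hk⟩
  set V := fun k => ehat k ⬝ᵥ (ηinv k *ᵥ ehat k)
  refine limsup_le_of_le_of_le_mul_add (u := fun k => V k / bhat) (by linarith) (by linarith)
    (fun k => dotProduct_star_self_nonneg (ehat k)) (fun k => ?_) (fun k => ?_)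
  · rw [le_div_iff₀ hb, mul_comm]
    exact (hlow k).mul_dotProduct_self_le_dotProduct_mulVec _
  · obtain ⟨d, hd, he⟩ := hdisturbance k
    have hstep := dotProduct_mulVec_covariance_update_le hγ₁0 hγ₂.le hbc (hpd k).posSemidef
      (hup k) (hpd (k + 1)).det_pos.ne'.isUnit (hrec k) (e := ehat k) hd
    rw [← he] at hstep
    calc V (k + 1) / bhat ≤ (2 * γ₁ * V k + 2 * γ₁ * bcheck * δ) / bhat :=
          div_le_div_of_nonneg_right hstep hb.le
      _ = 2 * γ₁ * (V k / bhat) + 2 * γ₁ * bcheck * δ / bhat := by ring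

/-- Theorem 1: with `0 < 2γ₁ ≤ 2/3`, `γ₂ ∈ (0,1]`, bounds `ν̄, θ̄ ≥ 0`,
minimum impulse gap `ℓ ≥ 2`, and Loewner bounds `0 < b̂ ≤ b̌`, there is a constant
`C ≥ 0` depending only on these parameters such that: for any covariance recursion
`η⁻¹(k+1) = γ₁ η⁻¹(k) + (1/γ₂) p(k+1)p(k+1)ᵀ` with `b̂ Iₙ ≤ η⁻¹(k) ≤ b̌ Iₙ`, any
impulse instants `(kₘ)` with `k₁ = 0` and gaps `≥ ℓ`, any displacements with
`‖ν(k)‖ ≤ ν̄`, `‖θ(k)‖ ≤ θ̄`, and any estimation error satisfying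
`ê(k+1) = γ₁ η(k+1) η⁻¹(k)(ê(k) + ν(k))` off impulses and
`ê(k+1) = γ₁ η(k+1) η⁻¹(k)(ê(k) + ν(k) + θ(k))` at impulses, one has
`limsup_{k→∞} ‖ê(k)‖² ≤ C` (here `‖ê(k)‖² = ê(k) ⬝ᵥ ê(k)` is the squared Euclidean
norm); i.e. the TPE approximately estimates the target position, with an asymptotic
bound independent of the initial estimation error. -/
theorem tpe_approximate_estimation (γ₁ γ₂ νbar θbar bhat bcheck : ℝ) (ℓ : ℕ)
    (hγ₁ : 0 < 2 * γ₁) (hγ₁' : 2 * γ₁ ≤ 2 / 3) (hγ₂ : 0 < γ₂) (hγ₂' : γ₂ ≤ 1)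
    (hν : 0 ≤ νbar) (hθ : 0 ≤ θbar) (hℓ : 2 ≤ ℓ) (hb : 0 < bhat) (hbb : bhat ≤ bcheck) :
    ∃ C ≥ (0 : ℝ), ∀ (n : ℕ) (p : ℕ → Fin n → ℝ)
      (ηinv : ℕ → Matrix (Fin n) (Fin n) ℝ) (km : ℕ → ℕ) (ν θ ehat : ℕ → Fin n → ℝ),
      (∀ k, (ηinv k).PosDef) →
      (∀ k, ηinv (k + 1) = γ₁ • ηinv k + γ₂⁻¹ • vecMulVec (p (k + 1)) (p (k + 1))) →
      (∀ k, (ηinv k - bhat • (1 : Matrix (Fin n) (Fin n) ℝ)).PosSemidef) →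
      (∀ k, (bcheck • (1 : Matrix (Fin n) (Fin n) ℝ) - ηinv k).PosSemidef) →
      StrictMono km → km 0 = 0 → (∀ m, km m + ℓ ≤ km (m + 1)) →
      (∀ k, Real.sqrt (ν k ⬝ᵥ ν k) ≤ νbar) →
      (∀ k, Real.sqrt (θ k ⬝ᵥ θ k) ≤ θbar) →
      (∀ k, k ∉ Set.range km →
        ehat (k + 1) = γ₁ • (((ηinv (k + 1))⁻¹ * ηinv k) *ᵥ (ehat k + ν k))) →
      (∀ k, k ∈ Set.range km →
        ehat (k + 1) = γ₁ • (((ηinv (k + 1))⁻¹ * ηinv k) *ᵥ (ehat k + ν k + θ k))) →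
      limsup (fun k => ehat k ⬝ᵥ ehat k) atTop ≤ C :=
  tpe_approximate_estimation_general γ₁ γ₂ νbar θbar bhat bcheck ℓ hγ₁ hγ₁' hγ₂ hb hbb
end

section
/- (Theorem 2) Let α ∈ ℝ and integer ℓ ≥ 2 satisfy 0 < 3(1+α)² ℓ ≤ 3/4, and let ν̄, θ̄ ≥ 0. Then there exists σ ≥ 0, depending only on α, ν̄, θ̄, ℓ, such that the following holds. Let (kₘ)_{m≥1} be strictly increasing impulse instants with k₁ = 0 and kₘ₊₁ − kₘ ≥ ℓ, let ν, θ : ℕ → ℝⁿ with ‖ν(k)‖ ≤ ν̄ and ‖θ(k)‖ ≤ θ̄, and let ê : ℕ → ℝⁿ be an estimation-error sequence with ê(k) → 0 as k → ∞. If the anti-synchronization error e_s : ℕ → ℝⁿ satisfies e_s(k+1) = (1+α) e_s(k) + 2α ê(k) − 2ν(k) at non-impulse instants and e_s(k+1) = (1+α) e_s(k) + 2α ê(k) − 2(ν(k) + θ(k)) at impulse instants k = kₘ, then limsup_{k→∞} ‖e_s(k)‖² ≤ σ. That is, under the target position estimator and the distributed anti-synchronization controller, the two agents achieve anti-synchronization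 centered at the target within the error boundary σ. -/
open Filter

/-- Theorem 2: with controller gain `α` and minimum impulse gap
`ℓ ≥ 2` satisfying `0 < 3(1+α)² ℓ ≤ 3/4`, and displacement bounds `ν̄, θ̄ ≥ 0`,
there exists an error boundary `σ ≥ 0`, depending only on `α, ν̄, θ̄, ℓ`, such that:
for any impulse instants `(kₘ)` with `k₁ = 0` and gaps `≥ ℓ`, any displacements with
`‖ν(k)‖ ≤ ν̄`, `‖θ(k)‖ ≤ θ̄`, any estimation error `ê(k) → 0`, and any
anti-synchronization error satisfying
`e_s(k+1) = (1+α) e_s(k) + 2α ê(k) − 2ν(k)` off impulses and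
`e_s(k+1) = (1+α) e_s(k) + 2α ê(k) − 2(ν(k) + θ(k))` at impulses, one has
`limsup_{k→∞} ‖e_s(k)‖² ≤ σ`; i.e. the two agents achieve anti-synchronization
centered at the target within the error boundary `σ`. -/
theorem dasc_anti_synchronization (α νbar θbar : ℝ) (ℓ : ℕ)
    (hℓ : 2 ≤ ℓ) (h1 : 0 < 3 * (1 + α) ^ 2 * (ℓ : ℝ))
    (h2 : 3 * (1 + α) ^ 2 * (ℓ : ℝ) ≤ 3 / 4)
    (hν : 0 ≤ νbar) (hθ : 0 ≤ θbar) :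
    ∃ σ ≥ (0 : ℝ), ∀ (n : ℕ) (km : ℕ → ℕ)
      (ν θ ehat es : ℕ → EuclideanSpace ℝ (Fin n)),
      StrictMono km → km 0 = 0 → (∀ m, km m + ℓ ≤ km (m + 1)) →
      (∀ k, ‖ν k‖ ≤ νbar) → (∀ k, ‖θ k‖ ≤ θbar) →
      Tendsto ehat atTop (nhds 0) →
      (∀ k, k ∉ Set.range km →
        es (k + 1) = (1 + α) • es k + (2 * α) • ehat k - (2 : ℝ) • ν k) →
      (∀ k, k ∈ Set.range km →
        es (k + 1) = (1 + α) • es k + (2 * α) • ehat k - (2 : ℝ) • (ν k + θ k)) →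
      limsup (fun k => ‖es k‖ ^ 2) atTop ≤ σ := by
  refine ⟨(4*|α| + 4*νbar + 4*θbar + 1)^2, sq_nonneg _, ?_⟩
  intro n km ν θ ehat es hmono hk0 hgap hνb hθb hehat hoff hon
  have hℓ' : (2:ℝ) ≤ (ℓ:ℝ) := by exact_mod_cast hℓ
  have hα : |1 + α| ≤ 1/2 := by
    nlinarith [sq_abs (1+α), abs_nonneg (1+α), sq_nonneg (1+α)]
  set C : ℝ := 2*|α| + 2*νbar + 2*θbar with hC
  have hC0 : 0 ≤ C := by positivity
  obtain ⟨N, hN⟩ : ∃ N, ∀ k ≥ N, ‖ehat k‖ ≤ 1 := by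
    have := (NormedAddCommGroup.tendsto_nhds_zero.mp hehat 1 one_pos)
    rw [eventually_atTop] at this
    obtain ⟨N, hN⟩ := this
    exact ⟨N, fun k hk => (hN k hk).le⟩
  have hstep : ∀ k ≥ N, ‖es (k+1)‖ ≤ (1/2) * ‖es k‖ + C := by
    intro k hk
    have he : ‖ehat k‖ ≤ 1 := hN k hk
    have key : ‖es (k+1)‖ ≤ |1+α| * ‖es k‖ + |2*α| * ‖ehat k‖ + 2*(νbar+θbar) := by
      by_cases h : k ∈ Set.range km
      · rw [hon k h]
        calc ‖(1 + α) • es k + (2 * α) • ehat k - (2:ℝ) • (ν k + θ k)‖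
            ≤ ‖(1 + α) • es k‖ + ‖(2 * α) • ehat k‖ + ‖(2:ℝ) • (ν k + θ k)‖ := by
              exact (norm_sub_le _ _).trans (by gcongr; exact norm_add_le _ _)
          _ ≤ |1+α| * ‖es k‖ + |2*α| * ‖ehat k‖ + 2*(νbar+θbar) := by
              rw [norm_smul, norm_smul, norm_smul, Real.norm_eq_abs, Real.norm_eq_abs,
                Real.norm_eq_abs, abs_two]
              have : ‖ν k + θ k‖ ≤ νbar + θbar :=
                (norm_add_le _ _).trans (add_le_add (hνb k) (hθb k))
              linarith
      · rw [hoff k h]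
        calc ‖(1 + α) • es k + (2 * α) • ehat k - (2:ℝ) • ν k‖
            ≤ ‖(1 + α) • es k‖ + ‖(2 * α) • ehat k‖ + ‖(2:ℝ) • ν k‖ := by
              exact (norm_sub_le _ _).trans (by gcongr; exact norm_add_le _ _)
          _ ≤ |1+α| * ‖es k‖ + |2*α| * ‖ehat k‖ + 2*(νbar+θbar) := by
              rw [norm_smul, norm_smul, norm_smul, Real.norm_eq_abs, Real.norm_eq_abs,
                Real.norm_eq_abs, abs_two]
              linarith [hνb k, hθ]
    have h2α : |2*α| * ‖ehat k‖ ≤ 2*|α| := by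
      rw [abs_mul, abs_two]
      calc 2*|α| * ‖ehat k‖ ≤ 2*|α| * 1 := by
            apply mul_le_mul_of_nonneg_left he; positivity
        _ = 2*|α| := by ring
    nlinarith [norm_nonneg (es k), mul_le_mul_of_nonneg_right hα (norm_nonneg (es k))]
  have hind : ∀ j, ‖es (N+j)‖ ≤ (1/2)^j * ‖es N‖ + 2*C := by
    intro j
    induction j with
    | zero => simp; positivity
    | succ j ih =>
      have hs := hstep (N+j) (Nat.le_add_right _ _)
      calc ‖es (N+(j+1))‖ = ‖es ((N+j)+1)‖ := by ring_nf
        _ ≤ (1/2) * ‖es (N+j)‖ + C := hs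
        _ ≤ (1/2) * ((1/2)^j * ‖es N‖ + 2*C) + C := by gcongr
        _ = (1/2)^(j+1) * ‖es N‖ + 2*C := by ring
  obtain ⟨J, hJ⟩ : ∃ J, ∀ j ≥ J, (1/2:ℝ)^j * ‖es N‖ ≤ 1 := by
    have h0 : Tendsto (fun j : ℕ => (1/2:ℝ)^j * ‖es N‖) atTop (nhds 0) := by
      simpa using (tendsto_pow_atTop_nhds_zero_of_lt_one (r := (1/2:ℝ)) (by norm_num) (by norm_num)).mul_const ‖es N‖
    obtain ⟨J, hJ⟩ := Metric.tendsto_atTop.mp h0 1 one_pos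
    refine ⟨J, fun j hj => ?_⟩
    have := hJ j hj
    rw [Real.dist_eq, sub_zero] at this
    calc (1/2:ℝ)^j * ‖es N‖ ≤ |(1/2:ℝ)^j * ‖es N‖| := le_abs_self _
      _ ≤ 1 := this.le
  have hev : ∀ k ≥ N + J, ‖es k‖^2 ≤ (4*|α| + 4*νbar + 4*θbar + 1)^2 := by
    intro k hk
    have hkN : N ≤ k := le_trans (Nat.le_add_right _ _) hk
    have hkeq : k = N + (k - N) := by omega
    have hjJ : J ≤ k - N := by omega
    have hb : ‖es k‖ ≤ 2*C + 1 := by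
      rw [hkeq]
      calc ‖es (N + (k-N))‖ ≤ (1/2)^(k-N) * ‖es N‖ + 2*C := hind _
        _ ≤ 1 + 2*C := by linarith [hJ _ hjJ]
        _ = 2*C + 1 := by ring
    have : 2*C + 1 = 4*|α| + 4*νbar + 4*θbar + 1 := by rw [hC]; ring
    rw [← this]
    exact pow_le_pow_left₀ (norm_nonneg _) hb 2
  apply Filter.limsup_le_of_le
  · refine ⟨0, ?_⟩
    simp only [eventually_map, eventually_atTop]
    intro a ha
    obtain ⟨b, hb⟩ := ha
    exact le_trans (sq_nonneg _) (hb b le_rfl)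
  · rw [eventually_atTop]
    exact ⟨N + J, hev⟩
end
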